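/- Let H be a Q-graded Hopf quasigroup. Then the antipode is anti-comultiplicative: Δ_{p^{-1}}(S_p(h)) = S_p(h_{(2)}) ⊗ S_p(h_{(1)}) for all p in Q and h in H_p. -/
import Mathlib


open TensorProduct

universe u v w

/-- A quasigroup: a set with product, identity `e`, and two-sided inverses satisfying
`p⁻¹(pq) = q` and `(qp)p⁻¹ = q`. -/
structure QuasigroupStruct (Q : Type u) where
  mul : Q → Q → Q
  one : Q
  inv : Q → Q
  mul_one : ∀ p, mul p one = p
  one_mul : ∀ p, mul one p = p
  inv_mul_cancel : ∀ p q, mul (inv p) (mul p q) = q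
  mul_inv_cancel : ∀ p q, mul (mul q p) (inv p) = q

namespace QuasigroupStruct

variable {Q : Type u} (G : QuasigroupStruct Q)

lemma inv_mul_self (p : Q) : G.mul (G.inv p) p = G.one := by
  have h := G.inv_mul_cancel p G.one
  rwa [G.mul_one] at h

lemma mul_inv_self (p : Q) : G.mul p (G.inv p) = G.one := by
  have h := G.mul_inv_cancel p G.one
  rwa [G.one_mul] at h

lemma inv_inv (p : Q) : G.inv (G.inv p) = p := by
  have h := G.inv_mul_cancel (G.inv p) p
  rw [G.inv_mul_self p] at h
  rwa [G.mul_one] at h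

lemma mul_inv_cancel_left (p q : Q) : G.mul p (G.mul (G.inv p) q) = q := by
  have h := G.inv_mul_cancel (G.inv p) q
  rwa [G.inv_inv] at h

lemma inv_mul_cancel_right (p q : Q) : G.mul (G.mul q (G.inv p)) p = q := by
  have h := G.mul_inv_cancel (G.inv p) q
  rwa [G.inv_inv] at h

lemma mul_inv_rev (p q : Q) : G.inv (G.mul p q) = G.mul (G.inv q) (G.inv p) := by
  have h1 : G.mul q (G.inv (G.mul p q)) = G.inv p := by
    have h := G.mul_inv_cancel (G.mul p q) (G.inv p)
    rwa [G.inv_mul_cancel p q] at h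
  calc G.inv (G.mul p q)
      = G.mul (G.inv q) (G.mul q (G.inv (G.mul p q))) := (G.inv_mul_cancel q _).symm
    _ = G.mul (G.inv q) (G.inv p) := by rw [h1]

lemma inv_one : G.inv G.one = G.one := by
  have h := G.inv_mul_cancel G.one G.one
  rwa [G.one_mul, G.mul_one] at h

end QuasigroupStruct

/-- Transport along an equality of grades, as a linear map. -/
def gcl {Q : Type u} {H : Q → Type w} {k : Type v} [CommSemiring k]
    [∀ p, AddCommMonoid (H p)] [∀ p, Module k (H p)] {p q : Q} (e : p = q) :
    H p →ₗ[k] H q := by subst e; exact LinearMap.id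

/-- A `Q`-graded Hopf quasigroup: a family of coassociative counital coalgebras `H p`
with a (not necessarily associative) graded multiplication, unit and antipode family,
such that the multiplications and the unit are coalgebra maps and the antipode
satisfies the Hopf quasigroup axioms. -/
structure GradedHopfQuasigroup (k : Type v) [CommRing k] {Q : Type u} (G : QuasigroupStruct Q)
    (H : Q → Type w) [∀ p, AddCommGroup (H p)] [∀ p, Module k (H p)]
    [∀ p, Coalgebra k (H p)] where
  mul : ∀ p q, H p →ₗ[k] H q →ₗ[k] H (G.mul p q)
  one : H G.one
  antipode : ∀ p, H p →ₗ[k] H (G.inv p)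
  mul_one' : ∀ (p : Q) (h : H p), gcl (k := k) (G.mul_one p) ((mul p G.one h) one) = h
  one_mul' : ∀ (p : Q) (h : H p), gcl (k := k) (G.one_mul p) ((mul G.one p one) h) = h
  comul_mul : ∀ (p q : Q) (h : H p) (g : H q),
    Coalgebra.comul (R := k) ((mul p q h) g) =
      (TensorProduct.map (TensorProduct.lift (mul p q)) (TensorProduct.lift (mul p q)))
        ((TensorProduct.tensorTensorTensorComm k (H p) (H p) (H q) (H q))
          (Coalgebra.comul h ⊗ₜ[k] Coalgebra.comul g))
  counit_mul : ∀ (p q : Q) (h : H p) (g : H q),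
    Coalgebra.counit (R := k) ((mul p q h) g) =
      Coalgebra.counit (R := k) h * Coalgebra.counit (R := k) g
  comul_one : Coalgebra.comul (R := k) one = one ⊗ₜ[k] one
  counit_one : Coalgebra.counit (R := k) one = 1
  /-- `S (h₁) (h₂ g) = ε(h) g` -/
  antipode_mul_left : ∀ (p q : Q) (h : H p) (g : H q),
    TensorProduct.lift
      (((mul (G.inv p) (G.mul p q)).comp (antipode p)).compl₂ ((mul p q).flip g))
      (Coalgebra.comul h)
      = gcl (k := k) (G.inv_mul_cancel p q).symm (Coalgebra.counit (R := k) h • g)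
  /-- `h₁ (S (h₂) g) = ε(h) g` -/
  antipode_mul_left' : ∀ (p q : Q) (h : H p) (g : H q),
    TensorProduct.lift
      ((mul p (G.mul (G.inv p) q)).compl₂ (((mul (G.inv p) q).flip g).comp (antipode p)))
      (Coalgebra.comul h)
      = gcl (k := k) (G.mul_inv_cancel_left p q).symm (Coalgebra.counit (R := k) h • g)
  /-- `(g S (h₁)) h₂ = ε(h) g` -/
  antipode_mul_right : ∀ (p q : Q) (h : H p) (g : H q),
    TensorProduct.lift
      ((mul (G.mul q (G.inv p)) p).comp ((mul q (G.inv p) g).comp (antipode p)))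
      (Coalgebra.comul h)
      = gcl (k := k) (G.inv_mul_cancel_right p q).symm (Coalgebra.counit (R := k) h • g)
  /-- `(g h₁) S (h₂) = ε(h) g` -/
  antipode_mul_right' : ∀ (p q : Q) (h : H p) (g : H q),
    TensorProduct.lift
      (((mul (G.mul q p) (G.inv p)).comp (mul q p g)).compl₂ (antipode p))
      (Coalgebra.comul h)
      = gcl (k := k) (G.mul_inv_cancel p q).symm (Coalgebra.counit (R := k) h • g)

variable {k : Type v} [Field k] {Q : Type u} {G : QuasigroupStruct Q}
  {H : Q → Type w} [∀ p, AddCommGroup (H p)] [∀ p, Module k (H p)]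
  [∀ p, Coalgebra k (H p)]

namespace HQCore

open LinearMap



variable {k : Type v} [Field k] {M : Type w} [AddCommGroup M] [Module k M]

/-- Componentwise multiplication on `M ⊗ M` induced by a bilinear `mu`. -/
noncomputable def P (mu : M →ₗ[k] M →ₗ[k] M) :
    (M ⊗[k] M) →ₗ[k] (M ⊗[k] M) →ₗ[k] (M ⊗[k] M) :=
  (TensorProduct.mk k (M ⊗[k] M) (M ⊗[k] M)).compr₂
    ((TensorProduct.map (TensorProduct.lift mu) (TensorProduct.lift mu)) ∘ₗ
      (TensorProduct.tensorTensorTensorComm k M M M M).toLinearMap)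

@[simp] lemma P_tmul (mu : M →ₗ[k] M →ₗ[k] M) (a b c d : M) :
    P mu (a ⊗ₜ[k] b) (c ⊗ₜ[k] d) = (mu a c) ⊗ₜ[k] (mu b d) := by
  simp [P]

theorem core (Δ : M →ₗ[k] M ⊗[k] M) (ε : M →ₗ[k] k) (mu : M →ₗ[k] M →ₗ[k] M)
    (S : M →ₗ[k] M) (u : M)
    (hcoassoc : ↑(TensorProduct.assoc k M M M) ∘ₗ Δ.rTensor M ∘ₗ Δ = Δ.lTensor M ∘ₗ Δ)
    (hcounit_r : ε.rTensor M ∘ₗ Δ = TensorProduct.mk k k M 1)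
    (hcounit_l : ε.lTensor M ∘ₗ Δ = (TensorProduct.mk k M k).flip 1)
    (hone_mul : ∀ x : M, mu u x = x)
    (hcomul_mul : ∀ a b : M, Δ (mu a b) = P mu (Δ a) (Δ b))
    (hcomul_one : Δ u = u ⊗ₜ[k] u)
    (hA1 : ∀ (y g : M), lift ((mu ∘ₗ (mu g)).compl₂ S) (Δ y) = ε y • g)
    (hA2 : ∀ (y g : M), lift (mu ∘ₗ ((mu g) ∘ₗ S)) (Δ y) = ε y • g)
    (h : M) :
    Δ (S h) = (TensorProduct.comm k M M) (map S S (Δ h)) := by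
  classical
  -- counit in "representation" form
  have hrep_r : ∀ (y : M) (s : Finset (M × M)), Δ y = ∑ i ∈ s, i.1 ⊗ₜ[k] i.2 →
      ∑ i ∈ s, ε i.1 • i.2 = y := by
    intro y s hsy
    have h1 : ε.rTensor M (Δ y) = (1 : k) ⊗ₜ[k] y := by
      rw [← LinearMap.comp_apply, hcounit_r]; rfl
    rw [hsy, map_sum] at h1
    have h2 := congrArg (TensorProduct.lid k M) h1
    simpa [map_sum] using h2
  have hrep_l : ∀ (y : M) (s : Finset (M × M)), Δ y = ∑ i ∈ s, i.1 ⊗ₜ[k] i.2 →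
      ∑ i ∈ s, ε i.2 • i.1 = y := by
    intro y s hsy
    have h1 : ε.lTensor M (Δ y) = y ⊗ₜ[k] (1 : k) := by
      rw [← LinearMap.comp_apply, hcounit_l]; rfl
    rw [hsy, map_sum] at h1
    have h2 := congrArg (TensorProduct.rid k M) h1
    simpa [map_sum] using h2
  have hmuid : mu u = LinearMap.id := LinearMap.ext hone_mul
  have hA3 : ∀ y : M, lift (mu ∘ₗ S) (Δ y) = ε y • u := by
    intro y
    have := hA2 y u
    rwa [hmuid, LinearMap.id_comp] at this
  have hPu : ∀ w : M ⊗[k] M, P mu (u ⊗ₜ[k] u) w = w := by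
    intro w
    induction w using TensorProduct.induction_on with
    | zero => simp
    | tmul c d => simp [hone_mul]
    | add x y hx hy => rw [map_add, hx, hy]
  set K : M →ₗ[k] M ⊗[k] M :=
    ((TensorProduct.comm k M M).toLinearMap ∘ₗ map S S) ∘ₗ Δ with hK
  set B₁ : M →ₗ[k] M →ₗ[k] M ⊗[k] M := ((P mu) ∘ₗ (Δ ∘ₗ S)).compl₂ Δ with hB₁def
  have hB₁ : B₁ = (mu ∘ₗ S).compr₂ Δ := by
    ext a b
    simp [hB₁def, hcomul_mul]
  have hL1 : ∀ a : M, lift B₁ (Δ a) = ε a • (u ⊗ₜ[k] u) := by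
    intro a
    rw [hB₁, TensorProduct.lift_compr₂, LinearMap.comp_apply, hA3, map_smul, hcomul_one]
  -- the key "recovery" lemma
  have key_R : ∀ (t : M ⊗[k] M) (y : M),
      lift (((P mu) ∘ₗ ((P mu t) ∘ₗ Δ)).compl₂ K) (Δ y) = ε y • t := by
    intro t y
    obtain ⟨sy, hsy⟩ := TensorProduct.exists_finset (Δ y)
    rw [hsy, map_sum]
    simp only [lift.tmul, compl₂_apply, coe_comp, Function.comp_apply]
    induction t using TensorProduct.induction_on with
    | zero => simp
    | add t₁ t₂ h₁ h₂ =>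
        simp only [map_add, LinearMap.add_apply, Finset.sum_add_distrib, h₁, h₂, smul_add]
    | tmul x z =>
      -- the 4-leg computation
      set KS : M ⊗[k] M →ₗ[k] M ⊗[k] M :=
        (TensorProduct.comm k M M).toLinearMap ∘ₗ map S S with hKS
      set Bψ : (M ⊗[k] M) →ₗ[k] (M ⊗[k] M) →ₗ[k] (M ⊗[k] M) :=
        ((P mu) ∘ₗ (P mu (x ⊗ₜ[k] z))).compl₂ KS with hBψ
      set φL : M ⊗[k] ((M ⊗[k] M) ⊗[k] M) →ₗ[k] (M ⊗[k] M) ⊗[k] (M ⊗[k] M) :=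
        (TensorProduct.assoc k M M (M ⊗[k] M)).symm.toLinearMap ∘ₗ
          LinearMap.lTensor M (TensorProduct.assoc k M M M).toLinearMap with hφL
      have step1 : ∀ i : M × M,
          P mu ((P mu (x ⊗ₜ[k] z)) (Δ i.1)) (K i.2) = lift Bψ ((Δ i.1) ⊗ₜ[k] (Δ i.2)) := by
        intro i
        simp [hBψ, hK, hKS]
      have PL1 : (LinearMap.rTensor (M ⊗[k] M) Δ) ∘ₗ (TensorProduct.assoc k M M M).toLinearMap
          = (TensorProduct.assoc k (M ⊗[k] M) M M).toLinearMap ∘ₗ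
              (LinearMap.rTensor M (LinearMap.rTensor M Δ)) := by
        apply TensorProduct.ext_threefold
        intro a b c
        simp
      have PL2 : (TensorProduct.assoc k (M ⊗[k] M) M M).toLinearMap ∘ₗ
            (LinearMap.rTensor M ((TensorProduct.assoc k M M M).symm.toLinearMap ∘ₗ
              LinearMap.lTensor M Δ))
          = φL ∘ₗ (LinearMap.lTensor M (LinearMap.rTensor M Δ)) ∘ₗ
              (TensorProduct.assoc k M M M).toLinearMap := by
        apply TensorProduct.ext_threefold
        intro a b c
        simp only [coe_comp, Function.comp_apply, LinearMap.rTensor_tmul,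
          LinearMap.lTensor_tmul, TensorProduct.assoc_tmul, LinearEquiv.coe_coe, hφL]
        induction Δ b using TensorProduct.induction_on with
        | zero => simp
        | tmul d₁ d₂ => simp
        | add w₁ w₂ hw₁ hw₂ =>
            simp only [map_add, TensorProduct.add_tmul, TensorProduct.tmul_add, map_add,
              hw₁, hw₂]
      have hcoassoc' : Δ.rTensor M ∘ₗ Δ =
          (TensorProduct.assoc k M M M).symm.toLinearMap ∘ₗ (Δ.lTensor M ∘ₗ Δ) := by
        rw [← hcoassoc]
        ext a
        simp
      have e1 : LinearMap.lTensor M Δ (Δ y)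
          = (TensorProduct.assoc k M M M) (LinearMap.rTensor M Δ (Δ y)) := by
        have := LinearMap.congr_fun hcoassoc y
        simpa using this.symm
      have Xy : map Δ Δ (Δ y) = φL ((LinearMap.lTensor M ((Δ.rTensor M) ∘ₗ Δ)) (Δ y)) := by
        calc map Δ Δ (Δ y)
            = LinearMap.rTensor (M ⊗[k] M) Δ (LinearMap.lTensor M Δ (Δ y)) := by
              rw [← LinearMap.rTensor_comp_lTensor]; rfl
          _ = LinearMap.rTensor (M ⊗[k] M) Δ
                ((TensorProduct.assoc k M M M) (LinearMap.rTensor M Δ (Δ y))) := by rw [e1]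
          _ = (TensorProduct.assoc k (M ⊗[k] M) M M)
                (LinearMap.rTensor M (LinearMap.rTensor M Δ)
                  (LinearMap.rTensor M Δ (Δ y))) := by
              have := LinearMap.congr_fun PL1 (LinearMap.rTensor M Δ (Δ y))
              simpa using this
          _ = (TensorProduct.assoc k (M ⊗[k] M) M M)
                (LinearMap.rTensor M ((Δ.rTensor M) ∘ₗ Δ) (Δ y)) := by
              simp [LinearMap.rTensor_comp]
          _ = (TensorProduct.assoc k (M ⊗[k] M) M M)
                (LinearMap.rTensor M ((TensorProduct.assoc k M M M).symm.toLinearMap ∘ₗ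
                  (Δ.lTensor M ∘ₗ Δ)) (Δ y)) := by rw [← hcoassoc']
          _ = (TensorProduct.assoc k (M ⊗[k] M) M M)
                (LinearMap.rTensor M ((TensorProduct.assoc k M M M).symm.toLinearMap ∘ₗ
                  Δ.lTensor M) (LinearMap.rTensor M Δ (Δ y))) := by
              simp [LinearMap.rTensor_comp]
          _ = φL ((LinearMap.lTensor M (LinearMap.rTensor M Δ))
                ((TensorProduct.assoc k M M M) (LinearMap.rTensor M Δ (Δ y)))) := by
              have := LinearMap.congr_fun PL2 (LinearMap.rTensor M Δ (Δ y))
              simpa using this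
          _ = φL ((LinearMap.lTensor M (LinearMap.rTensor M Δ))
                (LinearMap.lTensor M Δ (Δ y))) := by rw [← e1]
          _ = φL ((LinearMap.lTensor M ((Δ.rTensor M) ∘ₗ Δ)) (Δ y)) := by
              rw [LinearMap.lTensor_comp]; rfl
      have sum1 : ∑ i ∈ sy, P mu ((P mu (x ⊗ₜ[k] z)) (Δ i.1)) (K i.2)
          = lift Bψ (map Δ Δ (Δ y)) := by
        rw [hsy, map_sum, map_sum]
        exact Finset.sum_congr rfl fun i _ => by rw [step1 i]; simp
      rw [sum1, Xy, hsy, map_sum, map_sum, map_sum]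
      -- now per-i computation
      have per_i : ∀ i : M × M, lift Bψ (φL ((LinearMap.lTensor M ((Δ.rTensor M) ∘ₗ Δ))
            (i.1 ⊗ₜ[k] i.2)))
          = (mu (mu x i.1) (S i.2)) ⊗ₜ[k] z := by
        intro i
        obtain ⟨s2, hs2⟩ := TensorProduct.exists_finset (Δ i.2)
        have hΛ : ∀ w : M, (lift Bψ ∘ₗ φL ∘ₗ TensorProduct.mk k M ((M ⊗[k] M) ⊗[k] M) i.1) ∘ₗ
              (TensorProduct.mk k (M ⊗[k] M) M).flip w
            = (TensorProduct.mk k M M (mu (mu x i.1) (S w))) ∘ₗ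
                lift ((mu ∘ₗ (mu z)).compl₂ S) := by
          intro w
          apply TensorProduct.ext'
          intro v₁ v₂
          simp [hφL, hBψ, hKS]
        calc lift Bψ (φL ((LinearMap.lTensor M ((Δ.rTensor M) ∘ₗ Δ)) (i.1 ⊗ₜ[k] i.2)))
            = lift Bψ (φL (i.1 ⊗ₜ[k] ((Δ.rTensor M) (Δ i.2)))) := by
              rw [LinearMap.lTensor_tmul]; rfl
          _ = ∑ m ∈ s2, lift Bψ (φL (i.1 ⊗ₜ[k] ((Δ m.1) ⊗ₜ[k] m.2))) := by
              rw [hs2, map_sum]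
              simp only [TensorProduct.tmul_sum, map_sum, LinearMap.rTensor_tmul]
          _ = ∑ m ∈ s2, ε m.1 • ((mu (mu x i.1) (S m.2)) ⊗ₜ[k] z) := by
              refine Finset.sum_congr rfl fun m _ => ?_
              have h1 := congrArg (fun (f : (M ⊗[k] M) →ₗ[k] M ⊗[k] M) => f (Δ m.1)) (hΛ m.2)
              simp only [coe_comp, Function.comp_apply, LinearMap.flip_apply,
                TensorProduct.mk_apply] at h1
              rw [h1, hA1 m.1 z]
              simp [TensorProduct.tmul_smul, TensorProduct.smul_tmul']
          _ = ∑ m ∈ s2, (mu (mu x i.1) (S (ε m.1 • m.2))) ⊗ₜ[k] z := by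
              refine Finset.sum_congr rfl fun m _ => ?_
              rw [map_smul, map_smul, TensorProduct.smul_tmul']
          _ = (mu (mu x i.1) (S (∑ m ∈ s2, ε m.1 • m.2))) ⊗ₜ[k] z := by
              rw [map_sum, map_sum, TensorProduct.sum_tmul]
          _ = (mu (mu x i.1) (S i.2)) ⊗ₜ[k] z := by rw [hrep_r i.2 s2 hs2]
      calc ∑ i ∈ sy, lift Bψ (φL ((LinearMap.lTensor M ((Δ.rTensor M) ∘ₗ Δ)) (i.1 ⊗ₜ[k] i.2)))
          = ∑ i ∈ sy, (mu (mu x i.1) (S i.2)) ⊗ₜ[k] z :=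
            Finset.sum_congr rfl fun i _ => per_i i
        _ = (∑ i ∈ sy, mu (mu x i.1) (S i.2)) ⊗ₜ[k] z := by rw [TensorProduct.sum_tmul]
        _ = (lift ((mu ∘ₗ (mu x)).compl₂ S) (Δ y)) ⊗ₜ[k] z := by
            congr 1
            rw [hsy, map_sum]
            exact Finset.sum_congr rfl fun i _ => by simp
        _ = (ε y • x) ⊗ₜ[k] z := by rw [hA1]
        _ = ε y • (x ⊗ₜ[k] z) := by rw [TensorProduct.smul_tmul']
  -- main argument
  obtain ⟨s, hs⟩ := TensorProduct.exists_finset (Δ h)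
  set N : (M ⊗[k] M) →ₗ[k] M →ₗ[k] M ⊗[k] M := ((P mu) ∘ₗ lift B₁).compl₂ K with hN
  have Eval1 : lift N ((Δ.rTensor M) (Δ h)) = K h := by
    rw [hs, map_sum, map_sum]
    calc ∑ i ∈ s, lift N ((Δ i.1) ⊗ₜ[k] i.2)
        = ∑ i ∈ s, ε i.1 • K i.2 := by
          refine Finset.sum_congr rfl fun i _ => ?_
          rw [lift.tmul]
          simp only [hN, compl₂_apply, coe_comp, Function.comp_apply]
          rw [hL1 i.1, map_smul, LinearMap.smul_apply, hPu]
      _ = K (∑ i ∈ s, ε i.1 • i.2) := by rw [map_sum]; simp only [map_smul]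
      _ = K h := by rw [hrep_r h s hs]
  have Eval2 : lift N ((Δ.rTensor M) (Δ h)) = Δ (S h) := by
    have e1 : (Δ.rTensor M) (Δ h)
        = (TensorProduct.assoc k M M M).symm ((Δ.lTensor M) (Δ h)) := by
      have := LinearMap.congr_fun hcoassoc h
      simp only [coe_comp, Function.comp_apply, LinearEquiv.coe_coe] at this
      rw [← this, LinearEquiv.symm_apply_apply]
    rw [e1, hs, map_sum, map_sum, map_sum]
    have per_i : ∀ i : M × M,
        lift N ((TensorProduct.assoc k M M M).symm
          ((LinearMap.lTensor M Δ) (i.1 ⊗ₜ[k] i.2)))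
        = ε i.2 • Δ (S i.1) := by
      intro i
      have hZZ : lift N ∘ₗ (TensorProduct.assoc k M M M).symm.toLinearMap ∘ₗ
            TensorProduct.mk k M (M ⊗[k] M) i.1
          = lift (((P mu) ∘ₗ ((P mu (Δ (S i.1))) ∘ₗ Δ)).compl₂ K) := by
        apply TensorProduct.ext'
        intro b c
        simp [hN, hB₁def]
      have := congrArg (fun (f : (M ⊗[k] M) →ₗ[k] M ⊗[k] M) => f (Δ i.2)) hZZ
      simp only [coe_comp, Function.comp_apply, TensorProduct.mk_apply,
        LinearEquiv.coe_coe] at this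
      rw [LinearMap.lTensor_tmul, this, key_R]
    calc ∑ i ∈ s, lift N ((TensorProduct.assoc k M M M).symm
            ((LinearMap.lTensor M Δ) (i.1 ⊗ₜ[k] i.2)))
        = ∑ i ∈ s, ε i.2 • Δ (S i.1) := Finset.sum_congr rfl fun i _ => per_i i
      _ = Δ (S (∑ i ∈ s, ε i.2 • i.1)) := by
          rw [map_sum, map_sum]
          exact Finset.sum_congr rfl fun i _ => by rw [map_smul, map_smul]
      _ = Δ (S h) := by rw [hrep_l h s hs]
  rw [← Eval2, Eval1, hK]
  simp

end HQCore


namespace HQGraded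

open TensorProduct LinearMap DirectSum

variable {k : Type v} [Field k] {Q : Type u} {G : QuasigroupStruct Q}
  {H : Q → Type w} [∀ p, AddCommGroup (H p)] [∀ p, Module k (H p)]
  [∀ p, Coalgebra k (H p)] [DecidableEq Q]

variable (A : GradedHopfQuasigroup k G H)

noncomputable def SM : (⨁ p, H p) →ₗ[k] ⨁ p, H p :=
  DirectSum.toModule k Q _ fun p => (DirectSum.lof k Q H (G.inv p)) ∘ₗ A.antipode p

noncomputable def muM : (⨁ p, H p) →ₗ[k] (⨁ p, H p) →ₗ[k] ⨁ p, H p :=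
  DirectSum.toModule k Q _ fun p =>
    (DirectSum.toModule k Q _ fun q =>
      ((A.mul p q).compr₂ (DirectSum.lof k Q H (G.mul p q))).flip).flip

noncomputable def oneM : ⨁ p, H p := DirectSum.lof k Q H G.one A.one

noncomputable def ΔM (_A : GradedHopfQuasigroup k G H) : (⨁ p, H p) →ₗ[k] (⨁ p, H p) ⊗[k] (⨁ p, H p) :=
  DirectSum.toModule k Q _ fun p =>
    (TensorProduct.map (DirectSum.lof k Q H p) (DirectSum.lof k Q H p)) ∘ₗ
      (Coalgebra.comul (R := k) (A := H p))

noncomputable def εM (_A : GradedHopfQuasigroup k G H) : (⨁ p, H p) →ₗ[k] k :=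
  DirectSum.toModule k Q _ fun p => Coalgebra.counit (R := k) (A := H p)

@[simp] lemma SM_lof (p : Q) (x : H p) :
    SM A (DirectSum.lof k Q H p x) = DirectSum.lof k Q H (G.inv p) (A.antipode p x) := by
  simp [SM]

@[simp] lemma muM_lof (p q : Q) (x : H p) (y : H q) :
    muM A (DirectSum.lof k Q H p x) (DirectSum.lof k Q H q y)
      = DirectSum.lof k Q H (G.mul p q) (A.mul p q x y) := by
  simp [muM]

@[simp] lemma ΔM_lof (p : Q) (x : H p) :
    ΔM A (DirectSum.lof k Q H p x)
      = TensorProduct.map (DirectSum.lof k Q H p) (DirectSum.lof k Q H p)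
          (Coalgebra.comul (R := k) x) := by
  simp [ΔM]

@[simp] lemma εM_lof (p : Q) (x : H p) :
    εM A (DirectSum.lof k Q H p x) = Coalgebra.counit (R := k) x := by
  simp [εM]

lemma lof_gcl {p q : Q} (e : p = q) (x : H p) :
    DirectSum.lof k Q H q (gcl (k := k) e x) = DirectSum.lof k Q H p x := by
  subst e; rfl

lemma ΔM_comp_lof (p : Q) :
    (ΔM A) ∘ₗ DirectSum.lof k Q H p
      = TensorProduct.map (DirectSum.lof k Q H p) (DirectSum.lof k Q H p) ∘ₗ
          (Coalgebra.comul (R := k) (A := H p)) := by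
  apply LinearMap.ext; intro x; simp

lemma hcoassocM :
    ↑(TensorProduct.assoc k (⨁ p, H p) (⨁ p, H p) (⨁ p, H p)) ∘ₗ
        (ΔM A).rTensor _ ∘ₗ (ΔM A) = (ΔM A).lTensor _ ∘ₗ (ΔM A) := by
  apply DirectSum.linearMap_ext
  intro p
  apply LinearMap.ext
  intro x
  simp only [coe_comp, Function.comp_apply, LinearEquiv.coe_coe, ΔM_lof]
  set l := DirectSum.lof k Q H p with hl
  have h1 : (ΔM A).rTensor _ (TensorProduct.map l l (Coalgebra.comul (R := k) x))
      = TensorProduct.map ((TensorProduct.map l l) ∘ₗ (Coalgebra.comul (R := k))) l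
          (Coalgebra.comul (R := k) x) := by
    rw [← LinearMap.comp_apply, rTensor_comp_map, ΔM_comp_lof]
  have h2 : (ΔM A).lTensor _ (TensorProduct.map l l (Coalgebra.comul (R := k) x))
      = TensorProduct.map l ((TensorProduct.map l l) ∘ₗ (Coalgebra.comul (R := k)))
          (Coalgebra.comul (R := k) x) := by
    rw [← LinearMap.comp_apply, lTensor_comp_map, ΔM_comp_lof]
  rw [h1, h2]
  have h3 : TensorProduct.map ((TensorProduct.map l l) ∘ₗ (Coalgebra.comul (R := k))) l
        = TensorProduct.map (TensorProduct.map l l) l ∘ₗ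
            (Coalgebra.comul (R := k) (A := H p)).rTensor _ := by
    rw [LinearMap.rTensor, ← TensorProduct.map_comp, LinearMap.comp_id]
  have h4 : TensorProduct.map l ((TensorProduct.map l l) ∘ₗ (Coalgebra.comul (R := k)))
        = TensorProduct.map l (TensorProduct.map l l) ∘ₗ
            (Coalgebra.comul (R := k) (A := H p)).lTensor _ := by
    rw [LinearMap.lTensor, ← TensorProduct.map_comp, LinearMap.comp_id]
  rw [h3, h4]
  simp only [coe_comp, Function.comp_apply]
  rw [← TensorProduct.map_map_assoc]
  congr 1
  have := LinearMap.congr_fun (Coalgebra.coassoc (R := k) (A := H p)) x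
  simpa using this

lemma hcounit_rM :
    (εM A).rTensor _ ∘ₗ (ΔM A) = TensorProduct.mk k k (⨁ p, H p) 1 := by
  apply DirectSum.linearMap_ext
  intro p
  apply LinearMap.ext
  intro x
  simp only [coe_comp, Function.comp_apply, ΔM_lof]
  have hε : (εM A) ∘ₗ DirectSum.lof k Q H p
      = (Coalgebra.counit (R := k) (A := H p)) := by
    apply LinearMap.ext; intro y; simp
  set l := DirectSum.lof k Q H p
  have h1 : (εM A).rTensor _ (TensorProduct.map l l (Coalgebra.comul (R := k) x))
      = TensorProduct.map (Coalgebra.counit (R := k)) l (Coalgebra.comul (R := k) x) := by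
    rw [← LinearMap.comp_apply, rTensor_comp_map, hε]
  rw [h1]
  have h2 : TensorProduct.map (Coalgebra.counit (R := k) (A := H p)) l
      = l.lTensor k ∘ₗ (Coalgebra.counit (R := k) (A := H p)).rTensor _ := by
    rw [LinearMap.lTensor, LinearMap.rTensor, ← TensorProduct.map_comp,
      LinearMap.comp_id, LinearMap.id_comp]
  rw [h2, LinearMap.comp_apply, Coalgebra.rTensor_counit_comul]
  simp

lemma hcounit_lM :
    (εM A).lTensor _ ∘ₗ (ΔM A) = (TensorProduct.mk k (⨁ p, H p) k).flip 1 := by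
  apply DirectSum.linearMap_ext
  intro p
  apply LinearMap.ext
  intro x
  simp only [coe_comp, Function.comp_apply, ΔM_lof]
  have hε : (εM A) ∘ₗ DirectSum.lof k Q H p
      = (Coalgebra.counit (R := k) (A := H p)) := by
    apply LinearMap.ext; intro y; simp
  set l := DirectSum.lof k Q H p
  have h1 : (εM A).lTensor _ (TensorProduct.map l l (Coalgebra.comul (R := k) x))
      = TensorProduct.map l (Coalgebra.counit (R := k)) (Coalgebra.comul (R := k) x) := by
    rw [← LinearMap.comp_apply, lTensor_comp_map, hε]
  rw [h1]
  have h2 : TensorProduct.map l (Coalgebra.counit (R := k) (A := H p))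
      = l.rTensor k ∘ₗ (Coalgebra.counit (R := k) (A := H p)).lTensor _ := by
    rw [LinearMap.lTensor, LinearMap.rTensor, ← TensorProduct.map_comp,
      LinearMap.comp_id, LinearMap.id_comp]
  rw [h2, LinearMap.comp_apply, Coalgebra.lTensor_counit_comul]
  simp

lemma hone_mulM : ∀ x : ⨁ p, H p, muM A (oneM A) x = x := by
  have : muM A (oneM A) = LinearMap.id := by
    apply DirectSum.linearMap_ext
    intro q
    apply LinearMap.ext
    intro y
    simp only [coe_comp, Function.comp_apply, id_coe, id_eq, oneM, muM_lof]
    rw [← lof_gcl (k := k) (G.one_mul q), A.one_mul']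
  intro x; rw [this]; rfl

lemma ttc_nat {M₁ M₂ M₃ M₄ N₁ N₂ N₃ N₄ : Type*}
    [AddCommGroup M₁] [AddCommGroup M₂] [AddCommGroup M₃] [AddCommGroup M₄]
    [AddCommGroup N₁] [AddCommGroup N₂] [AddCommGroup N₃] [AddCommGroup N₄]
    [Module k M₁] [Module k M₂] [Module k M₃] [Module k M₄]
    [Module k N₁] [Module k N₂] [Module k N₃] [Module k N₄]
    (f₁ : M₁ →ₗ[k] N₁) (f₂ : M₂ →ₗ[k] N₂) (f₃ : M₃ →ₗ[k] N₃) (f₄ : M₄ →ₗ[k] N₄) :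
    (TensorProduct.tensorTensorTensorComm k N₁ N₂ N₃ N₄).toLinearMap ∘ₗ
        TensorProduct.map (TensorProduct.map f₁ f₂) (TensorProduct.map f₃ f₄)
      = TensorProduct.map (TensorProduct.map f₁ f₃) (TensorProduct.map f₂ f₄) ∘ₗ
          (TensorProduct.tensorTensorTensorComm k M₁ M₂ M₃ M₄).toLinearMap := by
  apply TensorProduct.ext_fourfold'
  intro a b c d
  simp

lemma lift_muM_lof (p q : Q) :
    TensorProduct.lift (muM A) ∘ₗ
        TensorProduct.map (DirectSum.lof k Q H p) (DirectSum.lof k Q H q)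
      = DirectSum.lof k Q H (G.mul p q) ∘ₗ TensorProduct.lift (A.mul p q) := by
  apply TensorProduct.ext'
  intro x y
  simp

lemma hcomul_mulM : ∀ a b : ⨁ p, H p,
    ΔM A (muM A a b) = HQCore.P (muM A) (ΔM A a) (ΔM A b) := by
  have main : (muM A).compr₂ (ΔM A)
      = ((HQCore.P (muM A)) ∘ₗ (ΔM A)).compl₂ (ΔM A) := by
    apply DirectSum.linearMap_ext
    intro p
    apply LinearMap.ext
    intro x
    apply DirectSum.linearMap_ext
    intro q
    apply LinearMap.ext
    intro y
    simp only [coe_comp, Function.comp_apply, compr₂_apply, compl₂_apply, muM_lof, ΔM_lof]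
    rw [A.comul_mul p q x y]
    have rhs : HQCore.P (muM A)
          (TensorProduct.map (DirectSum.lof k Q H p) (DirectSum.lof k Q H p)
            (Coalgebra.comul (R := k) x))
          (TensorProduct.map (DirectSum.lof k Q H q) (DirectSum.lof k Q H q)
            (Coalgebra.comul (R := k) y))
        = TensorProduct.map (TensorProduct.lift (muM A)) (TensorProduct.lift (muM A))
            ((TensorProduct.tensorTensorTensorComm k _ _ _ _)
              (TensorProduct.map
                (TensorProduct.map (DirectSum.lof k Q H p) (DirectSum.lof k Q H p))
                (TensorProduct.map (DirectSum.lof k Q H q) (DirectSum.lof k Q H q))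
                ((Coalgebra.comul (R := k) x) ⊗ₜ[k] (Coalgebra.comul (R := k) y)))) := by
      simp [HQCore.P]
    rw [rhs]
    have nat := LinearMap.congr_fun (ttc_nat (k := k) (DirectSum.lof k Q H p)
        (DirectSum.lof k Q H p) (DirectSum.lof k Q H q) (DirectSum.lof k Q H q))
      ((Coalgebra.comul (R := k) x) ⊗ₜ[k] (Coalgebra.comul (R := k) y))
    simp only [coe_comp, Function.comp_apply, LinearEquiv.coe_coe] at nat
    rw [nat]
    rw [← LinearMap.comp_apply (TensorProduct.map (TensorProduct.lift (muM A))
        (TensorProduct.lift (muM A))), ← TensorProduct.map_comp,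
      lift_muM_lof]
    rw [TensorProduct.map_comp]
    rfl
  intro a b
  exact LinearMap.congr_fun (LinearMap.congr_fun main a) b

lemma hcomul_oneM : ΔM A (oneM A) = (oneM A) ⊗ₜ[k] (oneM A) := by
  simp only [oneM, ΔM_lof, A.comul_one]
  rfl

lemma lift_zero' {N P R : Type*} [AddCommGroup N] [AddCommGroup P] [AddCommGroup R]
    [Module k N] [Module k P] [Module k R] :
    TensorProduct.lift (0 : N →ₗ[k] P →ₗ[k] R) = 0 :=
  TensorProduct.ext' fun _ _ => by simp

lemma lift_add' {N P R : Type*} [AddCommGroup N] [AddCommGroup P] [AddCommGroup R]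
    [Module k N] [Module k P] [Module k R] (B₁ B₂ : N →ₗ[k] P →ₗ[k] R) :
    TensorProduct.lift (B₁ + B₂) = TensorProduct.lift B₁ + TensorProduct.lift B₂ :=
  TensorProduct.ext' fun _ _ => by simp

lemma hA1M : ∀ (y g : ⨁ p, H p),
    TensorProduct.lift (((muM A) ∘ₗ ((muM A) g)).compl₂ (SM A)) (ΔM A y)
      = εM A y • g := by
  intro y g
  induction g using DirectSum.induction_on with
  | zero =>
    have e0 : ((muM A) ∘ₗ ((muM A) (0 : ⨁ p, H p))).compl₂ (SM A) = 0 := by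
      ext a b; simp
    rw [e0, lift_zero']
    simp
  | add g₁ g₂ h₁ h₂ =>
    have eadd : ((muM A) ∘ₗ ((muM A) (g₁ + g₂))).compl₂ (SM A)
        = ((muM A) ∘ₗ ((muM A) g₁)).compl₂ (SM A) +
            ((muM A) ∘ₗ ((muM A) g₂)).compl₂ (SM A) := by
      ext a b; simp
    rw [eadd, lift_add', LinearMap.add_apply, h₁, h₂, smul_add]
  | of q gq =>
    rw [← DirectSum.lof_eq_of k]
    -- reduce y to lof components
    revert y
    suffices hsuf : TensorProduct.lift (((muM A) ∘ₗ ((muM A) (DirectSum.lof k Q H q gq))).compl₂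
          (SM A)) ∘ₗ (ΔM A) = (εM A).smulRight (DirectSum.lof k Q H q gq) by
      intro y
      have := LinearMap.congr_fun hsuf y
      simpa using this
    apply DirectSum.linearMap_ext
    intro p
    apply LinearMap.ext
    intro x
    simp only [coe_comp, Function.comp_apply, ΔM_lof, smulRight_apply, εM_lof]
    rw [← LinearMap.comp_apply (TensorProduct.lift _), TensorProduct.lift_comp_map]
    have ebil : ((((muM A) ∘ₗ ((muM A) (DirectSum.lof k Q H q gq))).compl₂ (SM A)) ∘ₗ
            (DirectSum.lof k Q H p)).compl₂ (DirectSum.lof k Q H p)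
        = ((((A.mul (G.mul q p) (G.inv p)).comp (A.mul q p gq)).compl₂
            (A.antipode p))).compr₂ (DirectSum.lof k Q H (G.mul (G.mul q p) (G.inv p))) := by
      ext a b
      simp
    rw [ebil, TensorProduct.lift_compr₂, LinearMap.comp_apply, A.antipode_mul_right',
      lof_gcl]
    simp

lemma hA2M : ∀ (y g : ⨁ p, H p),
    TensorProduct.lift ((muM A) ∘ₗ (((muM A) g) ∘ₗ (SM A))) (ΔM A y)
      = εM A y • g := by
  intro y g
  induction g using DirectSum.induction_on with
  | zero =>
    have e0 : (muM A) ∘ₗ (((muM A) (0 : ⨁ p, H p)) ∘ₗ (SM A)) = 0 := by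
      ext a b; simp
    rw [e0, lift_zero']
    simp
  | add g₁ g₂ h₁ h₂ =>
    have eadd : (muM A) ∘ₗ (((muM A) (g₁ + g₂)) ∘ₗ (SM A))
        = (muM A) ∘ₗ (((muM A) g₁) ∘ₗ (SM A)) + (muM A) ∘ₗ (((muM A) g₂) ∘ₗ (SM A)) := by
      ext a b; simp
    rw [eadd, lift_add', LinearMap.add_apply, h₁, h₂, smul_add]
  | of q gq =>
    rw [← DirectSum.lof_eq_of k]
    revert y
    suffices hsuf : TensorProduct.lift ((muM A) ∘ₗ (((muM A) (DirectSum.lof k Q H q gq)) ∘ₗ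
          (SM A))) ∘ₗ (ΔM A) = (εM A).smulRight (DirectSum.lof k Q H q gq) by
      intro y
      have := LinearMap.congr_fun hsuf y
      simpa using this
    apply DirectSum.linearMap_ext
    intro p
    apply LinearMap.ext
    intro x
    simp only [coe_comp, Function.comp_apply, ΔM_lof, smulRight_apply, εM_lof]
    rw [← LinearMap.comp_apply (TensorProduct.lift _), TensorProduct.lift_comp_map]
    have ebil : (((muM A) ∘ₗ (((muM A) (DirectSum.lof k Q H q gq)) ∘ₗ (SM A))) ∘ₗ
            (DirectSum.lof k Q H p)).compl₂ (DirectSum.lof k Q H p)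
        = (((A.mul (G.mul q (G.inv p)) p).comp
            ((A.mul q (G.inv p) gq).comp (A.antipode p)))).compr₂
              (DirectSum.lof k Q H (G.mul (G.mul q (G.inv p)) p)) := by
      ext a b
      simp
    rw [ebil, TensorProduct.lift_compr₂, LinearMap.comp_apply, A.antipode_mul_right,
      lof_gcl]
    simp

end HQGraded

/-- The antipode is anti-comultiplicative: `Δ_{p⁻¹}(S_p h) = S_p(h₂) ⊗ S_p(h₁)`. -/
theorem gradedHopfQuasigroup_comul_antipode (A : GradedHopfQuasigroup k G H)
    (p : Q) (h : H p) :
    Coalgebra.comul (R := k) (A.antipode p h)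
      = (TensorProduct.comm k (H (G.inv p)) (H (G.inv p)))
          (TensorProduct.map (A.antipode p) (A.antipode p) (Coalgebra.comul h)) := by
    classical
  letI : DecidableEq Q := Classical.decEq Q
  have main := HQCore.core (HQGraded.ΔM A) (HQGraded.εM A) (HQGraded.muM A)
    (HQGraded.SM A) (HQGraded.oneM A)
    (HQGraded.hcoassocM A) (HQGraded.hcounit_rM A) (HQGraded.hcounit_lM A)
    (HQGraded.hone_mulM A) (HQGraded.hcomul_mulM A) (HQGraded.hcomul_oneM A)
    (HQGraded.hA1M A) (HQGraded.hA2M A) (DirectSum.lof k Q H p h)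
  set l := DirectSum.lof k Q H (G.inv p) with hl
  have lhs : HQGraded.ΔM A (HQGraded.SM A (DirectSum.lof k Q H p h))
      = TensorProduct.map l l (Coalgebra.comul (R := k) (A.antipode p h)) := by
    rw [HQGraded.SM_lof, HQGraded.ΔM_lof]
  have rhs : (TensorProduct.comm k _ _)
        (TensorProduct.map (HQGraded.SM A) (HQGraded.SM A)
          (HQGraded.ΔM A (DirectSum.lof k Q H p h)))
      = TensorProduct.map l l ((TensorProduct.comm k _ _)
          (TensorProduct.map (A.antipode p) (A.antipode p) (Coalgebra.comul (R := k) h))) := by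
    rw [HQGraded.ΔM_lof]
    rw [← LinearMap.comp_apply (TensorProduct.map _ _), ← TensorProduct.map_comp]
    have hc : (HQGraded.SM A) ∘ₗ DirectSum.lof k Q H p = l ∘ₗ A.antipode p := by
      apply LinearMap.ext; intro x; simp [hl]
    rw [hc, TensorProduct.map_comp, LinearMap.comp_apply]
    rw [TensorProduct.map_comm]
  rw [lhs, rhs] at main
  -- injectivity via the component projection
  have hinj := congrArg (TensorProduct.map (DirectSum.component k Q H (G.inv p))
    (DirectSum.component k Q H (G.inv p))) main
  have hid : ∀ w : H (G.inv p) ⊗[k] H (G.inv p),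
      TensorProduct.map (DirectSum.component k Q H (G.inv p))
        (DirectSum.component k Q H (G.inv p)) (TensorProduct.map l l w) = w := by
    intro w
    rw [← LinearMap.comp_apply, ← TensorProduct.map_comp]
    have hcl : (DirectSum.component k Q H (G.inv p)) ∘ₗ l = LinearMap.id := by
      apply LinearMap.ext; intro x
      simp [hl, DirectSum.component.lof_self]
    rw [hcl, TensorProduct.map_id, LinearMap.id_apply]
  rw [hid, hid] at hinj
  exact hinj
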